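/- arXiv:2309.03653 — 2 statements merged into one kernel-verified Lean document; each statement's English description precedes it below -/
import Mathlib

section
/- (Theorem 1: essentially exponential convergence of estimated von Neumann entropy.) Let d ≥ 1, and let ρ : [0,∞) → M_d(ℂ) and ρ̂ : [0,∞) → M_d(ℂ) be functions such that ρ(t) and ρ̂(t) are d×d density matrices for every t ≥ 0. Suppose there exist constants M > 0 and σ > 0 such that ‖ρ̂(t) - ρ(t)‖ ≤ M·e^{-σt} in the Frobenius norm for all t ≥ 0. Then there exist a finite time T > 0 and a constant K > 0 such that |S(ρ(t)) - S(ρ̂(t))| ≤ K·e^{-σ(1 - 1/e)t} for all t ≥ T. -/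
open Matrix
open scoped ComplexOrder

/-- The Frobenius (Hilbert–Schmidt) norm of a complex matrix. -/
noncomputable def frobNorm {d : ℕ} (M : Matrix (Fin d) (Fin d) ℂ) : ℝ :=
  Real.sqrt ((Mᴴ * M).trace.re)

/-- The von Neumann entropy of a Hermitian matrix: `S(ρ) = ∑ₖ -λₖ ln λₖ` where the `λₖ`
are the real eigenvalues (counted with multiplicity), with the convention `0 ln 0 = 0`.
For non-Hermitian matrices the value is defined to be `0`. -/
noncomputable def vnEntropy {d : ℕ} (ρ : Matrix (Fin d) (Fin d) ℂ) : ℝ :=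
  if h : ρ.IsHermitian then ∑ k, Real.negMulLog (h.eigenvalues k) else 0

/-!
For density matrices `A` and `B`, let `U` diagonalize `A`, so that `p k = (U⋆ A U)ₖₖ` are the
eigenvalues of `A`, and put `q k = (U⋆ B U)ₖₖ`. Writing `B = V diag(μ) V⋆`, the vector `q` is the
image of the eigenvalues `μ` of `B` under the doubly stochastic matrix `|(U⋆ V)ₖⱼ|²`, so
concavity of `η x = -x log x` gives `S(B) ≤ ∑ η(q k)`. Each `|q k - p k|` is a diagonal entry of
`U⋆ (B - A) U`, hence at most `‖B - A‖`. On `[0, 1]` one has `η y - η x ≤ η δ + δ` with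
`δ = |y - x|`, and the bound `η δ ≤ δ^(1 - ε) / (e ε)` at `ε = 1/e` turns this into
`η y - η x ≤ 2 δ^(1 - 1/e)`. Hence `|S(ρ) - S(ρ̂)| ≤ 2 d ‖ρ̂ - ρ‖^(1 - 1/e) ≤ 2 d M^(1 - 1/e) e^(-σ (1 - 1/e) t)`.
-/

open Real Set Finset

namespace Real

lemma one_sub_one_div_exp_one_nonneg : 0 ≤ 1 - 1 / exp 1 :=
  sub_nonneg.2 (div_le_one_of_le₀ (one_le_exp zero_le_one) (exp_pos 1).le)

lemma negMulLog_le_rpow_div {x ε : ℝ} (hx : 0 ≤ x) (hε : 0 < ε) :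
    negMulLog x ≤ x ^ (1 - ε) / (exp 1 * ε) := by
  rcases hx.eq_or_lt with rfl | hx
  · simp only [negMulLog_zero]
    positivity
  have hlog : log (x ^ (-ε)) ≤ x ^ (-ε) / exp 1 := by
    have := log_le_sub_one_of_pos (show 0 < x ^ (-ε) / exp 1 by positivity)
    rwa [log_div (by positivity) (exp_pos 1).ne', log_exp, sub_le_sub_iff_right] at this
  rw [log_rpow hx] at hlog
  calc negMulLog x = x * (-ε * log x) / ε := by rw [negMulLog]; field_simp
    _ ≤ x * (x ^ (-ε) / exp 1) / ε := by gcongr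
    _ = x ^ (1 - ε) / (exp 1 * ε) := by
      rw [rpow_sub hx, rpow_one, rpow_neg hx.le]; field_simp

lemma negMulLog_add_le {a b : ℝ} (ha : 0 ≤ a) (hb : 0 ≤ b) :
    negMulLog (a + b) ≤ negMulLog a + negMulLog b := by
  have mul_log_le : ∀ {u v : ℝ}, 0 ≤ u → 0 ≤ v → u * log u ≤ u * log (u + v) := by
    intro u v hu hv
    rcases hu.eq_or_lt with rfl | hu
    · simp
    · exact mul_le_mul_of_nonneg_left (log_le_log hu (by linarith)) hu.le
  have hab := mul_log_le ha hb
  have hba := mul_log_le hb ha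
  rw [add_comm b a] at hba
  simp only [negMulLog]
  linarith

lemma monotoneOn_negMulLog_add_self : MonotoneOn (fun t ↦ negMulLog t + t) (Icc 0 1) := by
  rintro y ⟨hy, -⟩ x ⟨-, hx⟩ hyx
  have hlog_x : (x - y) * log x ≤ 0 :=
    mul_nonpos_of_nonneg_of_nonpos (by linarith) (log_nonpos (hy.trans hyx) hx)
  have hlog_ratio : y * (log x - log y) ≤ x - y := by
    rcases hy.eq_or_lt with rfl | hy
    · simpa using hy.trans hyx
    · rw [← log_div (hy.trans_le hyx).ne' hy.ne']
      calc y * log (x / y) ≤ y * (x / y - 1) :=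
            mul_le_mul_of_nonneg_left
              (log_le_sub_one_of_pos (div_pos (hy.trans_le hyx) hy)) hy.le
        _ = x - y := by field_simp
  simp only [negMulLog]
  linarith

lemma negMulLog_sub_negMulLog_le_negMulLog_abs_sub_add {x y : ℝ} (hx : x ∈ Icc (0 : ℝ) 1)
    (hy : y ∈ Icc (0 : ℝ) 1) :
    negMulLog y - negMulLog x ≤ negMulLog |y - x| + |y - x| := by
  rcases le_total x y with h | h
  · have := negMulLog_add_le hx.1 (sub_nonneg.2 h)
    rw [add_sub_cancel] at this
    rw [abs_of_nonneg (sub_nonneg.2 h)]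
    linarith
  · have := monotoneOn_negMulLog_add_self hy hx h
    rw [abs_sub_comm, abs_of_nonneg (sub_nonneg.2 h)]
    linarith [negMulLog_nonneg (sub_nonneg.2 h) (by linarith [hx.2, hy.1] : x - y ≤ 1)]

lemma negMulLog_add_self_le_two_mul_rpow {δ : ℝ} (hδ : δ ∈ Icc (0 : ℝ) 1) :
    negMulLog δ + δ ≤ 2 * δ ^ (1 - 1 / exp 1) := by
  have h_negMulLog := negMulLog_le_rpow_div hδ.1 (ε := 1 / exp 1) (by positivity)
  rw [mul_one_div_cancel (exp_pos 1).ne', div_one] at h_negMulLog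
  have h_self : δ ≤ δ ^ (1 - 1 / exp 1) :=
    self_le_rpow_of_le_one hδ.1 hδ.2 (sub_le_self _ (by positivity))
  linarith

lemma negMulLog_sub_negMulLog_le {x y : ℝ} (hx : x ∈ Icc (0 : ℝ) 1) (hy : y ∈ Icc (0 : ℝ) 1) :
    negMulLog y - negMulLog x ≤ 2 * |y - x| ^ (1 - 1 / exp 1) :=
  (negMulLog_sub_negMulLog_le_negMulLog_abs_sub_add hx hy).trans <|
    negMulLog_add_self_le_two_mul_rpow
      ⟨abs_nonneg _, abs_sub_le_of_nonneg_of_le hy.1 hy.2 hx.1 hx.2⟩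

end Real

lemma ConcaveOn.sum_le_sum_mulVec_of_mem_doublyStochastic {n : Type*} [Fintype n] [DecidableEq n]
    {s : Set ℝ}
    {f : ℝ → ℝ} (hf : ConcaveOn ℝ s f) {P : Matrix n n ℝ} (hP : P ∈ doublyStochastic ℝ n)
    {x : n → ℝ} (hx : ∀ j, x j ∈ s) :
    ∑ j, f (x j) ≤ ∑ i, f ((P *ᵥ x) i) :=
  calc ∑ j, f (x j) = ∑ j, ∑ i, P i j • f (x j) := by
        simp only [smul_eq_mul, ← Finset.sum_mul, sum_col_of_mem_doublyStochastic hP, one_mul]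
    _ = ∑ i, ∑ j, P i j • f (x j) := Finset.sum_comm
    _ ≤ ∑ i, f (∑ j, P i j • x j) := Finset.sum_le_sum fun i _ ↦
        hf.le_map_sum (fun j _ ↦ nonneg_of_mem_doublyStochastic hP)
          (sum_row_of_mem_doublyStochastic hP i) (fun j _ ↦ hx j)
    _ = ∑ i, f ((P *ᵥ x) i) := rfl

namespace Matrix

variable {n : Type*} [Fintype n]

lemma trace_star_mul_mul_of_mem_unitaryGroup [DecidableEq n] {R : Type*} [CommRing R]
    [StarRing R] {U : Matrix n n R} (hU : U ∈ unitaryGroup n R) (X : Matrix n n R) :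
    (star U * X * U).trace = X.trace := by
  rw [trace_mul_cycle, Unitary.mul_star_self_of_mem hU, Matrix.one_mul]

lemma re_trace_conjTranspose_mul_self (C : Matrix n n ℂ) :
    (Cᴴ * C).trace.re = ∑ i, ∑ j, Complex.normSq (C j i) := by
  simp only [trace, diag, mul_apply, conjTranspose_apply, Complex.re_sum]
  refine Finset.sum_congr rfl fun i _ ↦ Finset.sum_congr rfl fun j _ ↦ ?_
  rw [Complex.star_def, ← Complex.normSq_eq_conj_mul_self, Complex.ofReal_re]

lemma normSq_mem_doublyStochastic [DecidableEq n] {W : Matrix n n ℂ} (hW : W ∈ unitaryGroup n ℂ) :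
    Matrix.of (fun i j ↦ Complex.normSq (W i j)) ∈ doublyStochastic ℝ n := by
  refine mem_doublyStochastic_iff_sum.2 ⟨fun i j ↦ Complex.normSq_nonneg _, fun i ↦ ?_, fun j ↦ ?_⟩
  · have h := congr_fun₂ (mem_unitaryGroup_iff.1 hW) i i
    simp only [mul_apply, star_apply, Complex.star_def, Complex.mul_conj, one_apply_eq] at h
    exact_mod_cast h
  · have h := congr_fun₂ (mem_unitaryGroup_iff'.1 hW) j j
    simp only [mul_apply, star_apply, Complex.star_def, mul_comm, Complex.mul_conj,
      one_apply_eq] at h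
    exact_mod_cast h

lemma mul_diagonal_mul_star_apply_self [DecidableEq n] (W : Matrix n n ℂ) (μ : n → ℝ) (k : n) :
    (W * diagonal (RCLike.ofReal ∘ μ) * star W : Matrix n n ℂ) k k =
      ↑(∑ j, Complex.normSq (W k j) * μ j) := by
  rw [mul_apply]
  push_cast
  refine Finset.sum_congr rfl fun j _ ↦ ?_
  rw [mul_diagonal, star_apply, Complex.star_def, Complex.normSq_eq_conj_mul_self]
  simp only [Function.comp_apply, RCLike.ofReal, Complex.coe_algebraMap]
  ring

lemma PosSemidef.re_apply_self_mem_Icc {C : Matrix n n ℂ} (hC : C.PosSemidef)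
    (htr : C.trace = 1) (k : n) : (C k k).re ∈ Icc (0 : ℝ) 1 := by
  have hdiag : ∀ i, 0 ≤ (C i i).re := fun i ↦ (Complex.nonneg_iff.1 hC.diag_nonneg).1
  refine ⟨hdiag k, ?_⟩
  calc (C k k).re ≤ ∑ i, (C i i).re := single_le_sum (fun i _ ↦ hdiag i) (mem_univ k)
    _ = 1 := by rw [← Complex.re_sum]; exact congr_arg Complex.re htr

lemma PosSemidef.sum_eigenvalues_le_sum_diag_of_concaveOn [DecidableEq n] {f : ℝ → ℝ}
    (hf : ConcaveOn ℝ (Ici 0) f) {B : Matrix n n ℂ} (hB : B.PosSemidef) {U : Matrix n n ℂ}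
    (hU : U ∈ unitaryGroup n ℂ) :
    ∑ j, f (hB.1.eigenvalues j) ≤ ∑ k, f ((star U * B * U) k k).re := by
  set V : Matrix n n ℂ := ↑hB.1.eigenvectorUnitary
  set W := star U * V
  have hW : W ∈ unitaryGroup n ℂ :=
    Submonoid.mul_mem _ (Unitary.star_mem hU) hB.1.eigenvectorUnitary.2
  have hconj : star U * B * U = W * diagonal (RCLike.ofReal ∘ hB.1.eigenvalues) * star W := by
    conv_lhs => rw [hB.1.spectral_theorem, Unitary.conjStarAlgAut_apply]
    simp only [W, V, star_mul, star_star, Matrix.mul_assoc]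
  have hdiag : ∀ k, ((star U * B * U) k k).re =
      (Matrix.of (fun i j ↦ Complex.normSq (W i j)) *ᵥ hB.1.eigenvalues) k := fun k ↦ by
    rw [hconj, mul_diagonal_mul_star_apply_self, Complex.ofReal_re]
    rfl
  simp only [hdiag]
  exact hf.sum_le_sum_mulVec_of_mem_doublyStochastic (normSq_mem_doublyStochastic hW)
    hB.eigenvalues_nonneg

end Matrix

section Frobenius

variable {d : ℕ}

lemma frobNorm_nonneg (C : Matrix (Fin d) (Fin d) ℂ) : 0 ≤ frobNorm C :=
  Real.sqrt_nonneg _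

lemma norm_apply_le_frobNorm (C : Matrix (Fin d) (Fin d) ℂ) (i j : Fin d) :
    ‖C i j‖ ≤ frobNorm C := by
  rw [frobNorm, Matrix.re_trace_conjTranspose_mul_self, Complex.norm_def]
  apply Real.sqrt_le_sqrt
  calc Complex.normSq (C i j) ≤ ∑ i', Complex.normSq (C i' j) :=
        single_le_sum (f := fun i' ↦ Complex.normSq (C i' j))
          (fun i' _ ↦ Complex.normSq_nonneg _) (mem_univ i)
    _ ≤ ∑ j', ∑ i', Complex.normSq (C i' j') :=
        single_le_sum (f := fun j' ↦ ∑ i', Complex.normSq (C i' j'))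
          (fun j' _ ↦ sum_nonneg fun i' _ ↦ Complex.normSq_nonneg _) (mem_univ j)

lemma frobNorm_star_mul_mul_of_mem_unitaryGroup {U : Matrix (Fin d) (Fin d) ℂ}
    (hU : U ∈ unitaryGroup (Fin d) ℂ) (C : Matrix (Fin d) (Fin d) ℂ) :
    frobNorm (star U * C * U) = frobNorm C := by
  have hconj : (star U * C * U)ᴴ * (star U * C * U) = star U * (Cᴴ * C) * U := by
    simp only [← star_eq_conjTranspose, star_mul, star_star, Matrix.mul_assoc]
    rw [← Matrix.mul_assoc U (star U), mem_unitaryGroup_iff.1 hU, Matrix.one_mul]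
  rw [frobNorm, frobNorm, hconj, trace_star_mul_mul_of_mem_unitaryGroup hU]

lemma frobNorm_sub_comm (A B : Matrix (Fin d) (Fin d) ℂ) :
    frobNorm (A - B) = frobNorm (B - A) := by
  rw [frobNorm, frobNorm, ← neg_sub, conjTranspose_neg, Matrix.neg_mul, Matrix.mul_neg, neg_neg]

end Frobenius

lemma vnEntropy_sub_le {d : ℕ} {A B : Matrix (Fin d) (Fin d) ℂ} (hA : A.PosSemidef)
    (hB : B.PosSemidef) (htrA : A.trace = 1) (htrB : B.trace = 1) :
    vnEntropy B - vnEntropy A ≤ 2 * d * frobNorm (B - A) ^ (1 - 1 / exp 1) := by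
  set U : Matrix (Fin d) (Fin d) ℂ := ↑hA.1.eigenvectorUnitary
  have hU : U ∈ unitaryGroup (Fin d) ℂ := hA.1.eigenvectorUnitary.2
  set p : Fin d → ℝ := fun k ↦ ((star U * A * U) k k).re
  set q : Fin d → ℝ := fun k ↦ ((star U * B * U) k k).re
  have hSA : vnEntropy A = ∑ k, negMulLog (p k) := by
    have hdiag := hA.1.conjStarAlgAut_star_eigenvectorUnitary
    rw [Unitary.conjStarAlgAut_star_apply] at hdiag
    simp only [vnEntropy, dif_pos hA.1, p, U, hdiag, diagonal_apply_eq, Function.comp_apply]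
    rfl
  have hSB : vnEntropy B ≤ ∑ k, negMulLog (q k) := by
    rw [vnEntropy, dif_pos hB.1]
    exact hB.sum_eigenvalues_le_sum_diag_of_concaveOn concaveOn_negMulLog hU
  have hp : ∀ k, p k ∈ Icc (0 : ℝ) 1 := (hA.conjTranspose_mul_mul_same U).re_apply_self_mem_Icc
    (by rw [← star_eq_conjTranspose, trace_star_mul_mul_of_mem_unitaryGroup hU, htrA])
  have hq : ∀ k, q k ∈ Icc (0 : ℝ) 1 := (hB.conjTranspose_mul_mul_same U).re_apply_self_mem_Icc
    (by rw [← star_eq_conjTranspose, trace_star_mul_mul_of_mem_unitaryGroup hU, htrB])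
  have hqp : ∀ k, |q k - p k| ≤ frobNorm (B - A) := fun k ↦
    calc |q k - p k| = |((star U * (B - A) * U) k k).re| := by
          simp only [q, p, Matrix.mul_sub, Matrix.sub_mul, Matrix.sub_apply, Complex.sub_re]
      _ ≤ frobNorm (star U * (B - A) * U) :=
          (Complex.abs_re_le_norm _).trans (norm_apply_le_frobNorm _ k k)
      _ = frobNorm (B - A) := frobNorm_star_mul_mul_of_mem_unitaryGroup hU _
  calc vnEntropy B - vnEntropy A ≤ ∑ k, (negMulLog (q k) - negMulLog (p k)) := by
        rw [hSA, sum_sub_distrib]; linarith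
    _ ≤ ∑ _k : Fin d, 2 * frobNorm (B - A) ^ (1 - 1 / exp 1) := sum_le_sum fun k _ ↦
        (negMulLog_sub_negMulLog_le (hp k) (hq k)).trans <| mul_le_mul_of_nonneg_left
          (rpow_le_rpow (abs_nonneg _) (hqp k) one_sub_one_div_exp_one_nonneg) zero_le_two
    _ = 2 * d * frobNorm (B - A) ^ (1 - 1 / exp 1) := by
        rw [sum_const, card_univ, Fintype.card_fin, nsmul_eq_mul]
        ring

lemma abs_vnEntropy_sub_le {d : ℕ} {A B : Matrix (Fin d) (Fin d) ℂ} (hA : A.PosSemidef)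
    (hB : B.PosSemidef) (htrA : A.trace = 1) (htrB : B.trace = 1) :
    |vnEntropy A - vnEntropy B| ≤ 2 * d * frobNorm (A - B) ^ (1 - 1 / exp 1) :=
  abs_sub_le_iff.2 ⟨vnEntropy_sub_le hB hA htrB htrA,
    frobNorm_sub_comm A B ▸ vnEntropy_sub_le hA hB htrA htrB⟩

theorem stmt_7_general (d : ℕ) (hd : 1 ≤ d)
    (ρ ρhat : ℝ → Matrix (Fin d) (Fin d) ℂ)
    (hρ : ∀ t : ℝ, 0 ≤ t → (ρ t).PosSemidef ∧ (ρ t).trace = 1)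
    (hρhat : ∀ t : ℝ, 0 ≤ t → (ρhat t).PosSemidef ∧ (ρhat t).trace = 1)
    (M σ : ℝ) (hM : 0 < M)
    (hconv : ∀ t : ℝ, 0 ≤ t → frobNorm (ρhat t - ρ t) ≤ M * Real.exp (-(σ * t))) :
    ∃ T : ℝ, 0 < T ∧ ∃ K : ℝ, 0 < K ∧ ∀ t : ℝ, T ≤ t →
      |vnEntropy (ρ t) - vnEntropy (ρhat t)| ≤
        K * Real.exp (-(σ * (1 - 1 / Real.exp 1) * t)) := by
  set c := 1 - 1 / exp 1
  have hd_pos : (0 : ℝ) < d := by exact_mod_cast hd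
  refine ⟨1, one_pos, 2 * d * M ^ c, by positivity, fun t ht ↦ ?_⟩
  have ht : 0 ≤ t := zero_le_one.trans ht
  obtain ⟨hρ_psd, hρ_tr⟩ := hρ t ht
  obtain ⟨hρhat_psd, hρhat_tr⟩ := hρhat t ht
  calc |vnEntropy (ρ t) - vnEntropy (ρhat t)| ≤ 2 * d * frobNorm (ρ t - ρhat t) ^ c :=
        abs_vnEntropy_sub_le hρ_psd hρhat_psd hρ_tr hρhat_tr
    _ ≤ 2 * d * (M * exp (-(σ * t))) ^ c := by
        gcongr
        · exact frobNorm_nonneg _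
        · exact one_sub_one_div_exp_one_nonneg
        · rw [frobNorm_sub_comm]
          exact hconv t ht
    _ = 2 * d * M ^ c * exp (-(σ * c * t)) := by
        rw [mul_rpow hM.le (exp_pos _).le, ← exp_mul]
        ring_nf

theorem stmt_7 (d : ℕ) (hd : 1 ≤ d)
    (ρ ρhat : ℝ → Matrix (Fin d) (Fin d) ℂ)
    (hρ : ∀ t : ℝ, 0 ≤ t → (ρ t).PosSemidef ∧ (ρ t).trace = 1)
    (hρhat : ∀ t : ℝ, 0 ≤ t → (ρhat t).PosSemidef ∧ (ρhat t).trace = 1)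
    (M σ : ℝ) (hM : 0 < M) (hσ : 0 < σ)
    (hconv : ∀ t : ℝ, 0 ≤ t → frobNorm (ρhat t - ρ t) ≤ M * Real.exp (-(σ * t))) :
    ∃ T : ℝ, 0 < T ∧ ∃ K : ℝ, 0 < K ∧ ∀ t : ℝ, T ≤ t →
      |vnEntropy (ρ t) - vnEntropy (ρhat t)| ≤
        K * Real.exp (-(σ * (1 - 1 / Real.exp 1) * t)) :=
  stmt_7_general d hd ρ ρhat hρ hρhat M σ hM hconv
end

section
/- (Theorem 2, part (ii): essentially exponential convergence of S(ρ‖ρ̂).) Let d ≥ 1, and let ρ : [0,∞) → M_d(ℂ) and ρ̂ : [0,∞) → M_d(ℂ) be functions such that ρ(t) and ρ̂(t) are positive definite d×d density matrices for every t ≥ 0. Suppose there exist constants M > 0 and σ > 0 with ‖ρ̂(t) - ρ(t)‖ ≤ M·e^{-σt} in the Frobenius norm for all t ≥ 0, and a constant D > 0 with ‖ln ρ̂(t)‖ ≤ D for all t ≥ 0. Then there exist a finite time T > 0 and a constant K > 0 such that |S(ρ(t)‖ρ̂(t))| ≤ K·e^{-σ(1 - 1/e)t} for all t ≥ T. -/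
open Matrix
open scoped ComplexOrder

/-- The matrix logarithm obtained via the continuous functional calculus. -/
noncomputable def matLog {d : ℕ} (ρ : Matrix (Fin d) (Fin d) ℂ) : Matrix (Fin d) (Fin d) ℂ :=
  cfc Real.log ρ

/-- The quantum relative entropy `S(σ‖ρ) = Re tr (σ ln σ - σ ln ρ)`. -/
noncomputable def relEntropy {d : ℕ} (σ ρ : Matrix (Fin d) (Fin d) ℂ) : ℝ :=
  ((σ * matLog σ - σ * matLog ρ).trace).re

/-! Diagonalise `ρ = ∑ λⱼ uⱼuⱼ*` and `ρ̂ = ∑ μₖ vₖvₖ*`. The weights `Pⱼₖ = |⟨uⱼ, vₖ⟩|²` form a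
doubly stochastic matrix, and `S(ρ‖ρ̂) = ∑ Pⱼₖ λⱼ (ln λⱼ - ln μₖ)`, `‖ρ̂ - ρ‖² = ∑ Pⱼₖ (λⱼ - μₖ)²`.
The bound `‖ln ρ̂‖ ≤ D` forces `μₖ ≥ e^{-D}`, so for `0 < λ ≤ 1` the elementary inequalities
`λ - μ ≤ λ (ln λ - ln μ) ≤ e^D |λ - μ|`, together with `∑ Pⱼₖ (λⱼ - μₖ) = tr ρ - tr ρ̂ = 0` and
Cauchy–Schwarz, give `0 ≤ S(ρ‖ρ̂) ≤ e^D √d ‖ρ̂ - ρ‖ ≤ e^D √d M e^{-σt}`. -/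

open Real

lemma sub_le_mul_log_sub_log {x y : ℝ} (hx : 0 < x) (hy : 0 < y) :
    x - y ≤ x * (log x - log y) := by
  have h := one_sub_inv_le_log_of_pos (div_pos hx hy)
  rw [log_div hx.ne' hy.ne', inv_div] at h
  have := mul_le_mul_of_nonneg_left h hx.le
  rwa [mul_sub, mul_one, mul_div_cancel₀ _ hx.ne'] at this

lemma mul_log_sub_log_le {x y D : ℝ} (hx : 0 < x) (hx1 : x ≤ 1) (hy : exp (-D) ≤ y) :
    x * (log x - log y) ≤ exp D * |x - y| := by
  have hy0 : 0 < y := (exp_pos _).trans_le hy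
  have hlog : log x - log y ≤ (x - y) / y := by
    rw [← log_div hx.ne' hy0.ne', sub_div, div_self hy0.ne']
    exact log_le_sub_one_of_pos (div_pos hx hy0)
  have hinv : y⁻¹ ≤ exp D := inv_le_of_inv_le₀ (exp_pos D) (by rwa [← exp_neg])
  rcases le_total x y with hxy | hxy
  · calc x * (log x - log y) ≤ x * ((x - y) / y) := mul_le_mul_of_nonneg_left hlog hx.le
      _ ≤ 0 := mul_nonpos_of_nonneg_of_nonpos hx.le
          (div_nonpos_of_nonpos_of_nonneg (sub_nonpos.2 hxy) hy0.le)
      _ ≤ exp D * |x - y| := by positivity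
  · calc x * (log x - log y) ≤ x * ((x - y) / y) := mul_le_mul_of_nonneg_left hlog hx.le
      _ ≤ (x - y) * y⁻¹ := mul_le_of_le_one_left (div_nonneg (sub_nonneg.2 hxy) hy0.le) hx1
      _ ≤ (x - y) * exp D := mul_le_mul_of_nonneg_left hinv (sub_nonneg.2 hxy)
      _ = exp D * |x - y| := by rw [abs_of_nonneg (sub_nonneg.2 hxy), mul_comm]

lemma sum_mul_abs_le_sqrt_mul_sqrt {ι : Type*} (s : Finset ι) {w : ι → ℝ} (hw : ∀ i, 0 ≤ w i)
    (x : ι → ℝ) : ∑ i ∈ s, w i * |x i| ≤ √(∑ i ∈ s, w i) * √(∑ i ∈ s, w i * x i ^ 2) := by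
  refine le_of_eq_of_le (Finset.sum_congr rfl fun i _ => ?_)
    (sum_sqrt_mul_sqrt_le s hw fun i => mul_nonneg (hw i) (sq_nonneg (x i)))
  have hsq : w i * (w i * x i ^ 2) = (w i * |x i|) ^ 2 := by rw [mul_pow, sq_abs]; ring
  rw [← sqrt_mul (hw i), hsq, sqrt_sq (mul_nonneg (hw i) (abs_nonneg _))]

namespace Matrix

variable {𝕜 n : Type*} [RCLike 𝕜] [Fintype n] [DecidableEq n]

lemma sum_norm_sq_row_eq_one {W : Matrix n n 𝕜} (hW : W ∈ unitary (Matrix n n 𝕜)) (j : n) :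
    ∑ k, ‖W j k‖ ^ 2 = 1 := by
  have h := congr_fun₂ (mem_unitaryGroup_iff.mp hW) j j
  simp only [mul_apply, star_apply, RCLike.star_def, RCLike.mul_conj, one_apply_eq] at h
  exact_mod_cast h

lemma sum_norm_sq_col_eq_one {W : Matrix n n 𝕜} (hW : W ∈ unitary (Matrix n n 𝕜)) (k : n) :
    ∑ j, ‖W j k‖ ^ 2 = 1 := by
  simpa using sum_norm_sq_row_eq_one (Unitary.star_mem hW) k

lemma trace_diagonal_mul_mul_diagonal_mul_star (a b : n → 𝕜) (W : Matrix n n 𝕜) :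
    (diagonal a * W * diagonal b * star W).trace = ∑ j, ∑ k, a j * b k * (‖W j k‖ ^ 2 : ℝ) := by
  simp only [trace, diag, mul_apply, diagonal_apply, star_apply, ite_mul, mul_ite, zero_mul,
    mul_zero, Finset.sum_ite_eq, Finset.sum_ite_eq', Finset.mem_univ, if_true, RCLike.star_def,
    RCLike.ofReal_pow, ← RCLike.mul_conj]
  refine Finset.sum_congr rfl fun j _ => Finset.sum_congr rfl fun k _ => ?_
  ring

namespace IsHermitian

variable {A B : Matrix n n 𝕜}

/-- `|⟨uⱼ, vₖ⟩|²` for the orthonormal eigenbases `(uⱼ)` of `A` and `(vₖ)` of `B`. -/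
noncomputable def eigenOverlap (hA : A.IsHermitian) (hB : B.IsHermitian) (j k : n) : ℝ :=
  ‖(star (hA.eigenvectorUnitary : Matrix n n 𝕜) * hB.eigenvectorUnitary) j k‖ ^ 2

variable (hA : A.IsHermitian) (hB : B.IsHermitian)

lemma eigenOverlap_nonneg (j k : n) : 0 ≤ eigenOverlap hA hB j k := by
  unfold eigenOverlap; positivity

lemma star_eigenvectorUnitary_mul_mem_unitary :
    star (hA.eigenvectorUnitary : Matrix n n 𝕜) * hB.eigenvectorUnitary ∈
      unitary (Matrix n n 𝕜) :=
  mul_mem (Unitary.star_mem hA.eigenvectorUnitary.2) hB.eigenvectorUnitary.2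

lemma sum_sum_eigenOverlap_mul_left (φ : n → ℝ) :
    ∑ j, ∑ k, eigenOverlap hA hB j k * φ j = ∑ j, φ j := by
  simp only [← Finset.sum_mul, eigenOverlap,
    sum_norm_sq_row_eq_one (star_eigenvectorUnitary_mul_mem_unitary hA hB), one_mul]

lemma sum_sum_eigenOverlap_mul_right (ψ : n → ℝ) :
    ∑ j, ∑ k, eigenOverlap hA hB j k * ψ k = ∑ k, ψ k := by
  rw [Finset.sum_comm]
  simp only [← Finset.sum_mul, eigenOverlap,
    sum_norm_sq_col_eq_one (star_eigenvectorUnitary_mul_mem_unitary hA hB), one_mul]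

lemma trace_cfc (f : ℝ → ℝ) : (cfc f A).trace = ∑ j, (f (hA.eigenvalues j) : 𝕜) := by
  rw [hA.cfc_eq, IsHermitian.cfc, Unitary.conjStarAlgAut_apply, trace_mul_cycle,
    mem_unitaryGroup_iff'.mp hA.eigenvectorUnitary.2, one_mul, trace_diagonal]
  rfl

lemma trace_cfc_mul_cfc (f g : ℝ → ℝ) :
    (cfc f A * cfc g B).trace =
      ((∑ j, ∑ k, eigenOverlap hA hB j k * f (hA.eigenvalues j) * g (hB.eigenvalues k) : ℝ) :
        𝕜) := by
  set U := (hA.eigenvectorUnitary : Matrix n n 𝕜)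
  set V := (hB.eigenvectorUnitary : Matrix n n 𝕜)
  have hcycle : cfc f A * cfc g B =
      U * (diagonal (RCLike.ofReal ∘ f ∘ hA.eigenvalues) * (star U * V) *
        diagonal (RCLike.ofReal ∘ g ∘ hB.eigenvalues) * star (star U * V)) * star U := by
    simp only [hA.cfc_eq, hB.cfc_eq, IsHermitian.cfc, Unitary.conjStarAlgAut_apply, star_mul,
      star_star, mul_assoc, Unitary.mul_star_self_of_mem hA.eigenvectorUnitary.2, mul_one, U, V]
  rw [hcycle, trace_mul_cycle, Unitary.star_mul_self_of_mem hA.eigenvectorUnitary.2, one_mul,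
    trace_diagonal_mul_mul_diagonal_mul_star]
  push_cast
  refine Finset.sum_congr rfl fun j _ => Finset.sum_congr rfl fun k _ => ?_
  simp only [eigenOverlap, Function.comp_apply, RCLike.ofReal_pow]
  ring

lemma trace_cfc_mul_cfc_self (f g : ℝ → ℝ) :
    (cfc f A * cfc g A).trace = ((∑ j, f (hA.eigenvalues j) * g (hA.eigenvalues j) : ℝ) : 𝕜) := by
  rw [← cfc_mul f g A (A.finite_real_spectrum.continuousOn f)
    (A.finite_real_spectrum.continuousOn g), hA.trace_cfc]
  push_cast
  rfl

lemma trace_mul_self_cfc_sub_cfc (f g : ℝ → ℝ) :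
    ((cfc g B - cfc f A) * (cfc g B - cfc f A)).trace =
      ((∑ j, ∑ k, eigenOverlap hA hB j k * (f (hA.eigenvalues j) - g (hB.eigenvalues k)) ^ 2 :
        ℝ) : 𝕜) := by
  have hsq : ∑ j, ∑ k, eigenOverlap hA hB j k * (f (hA.eigenvalues j) - g (hB.eigenvalues k)) ^ 2
      = ∑ k, g (hB.eigenvalues k) * g (hB.eigenvalues k)
        - 2 * ∑ j, ∑ k, eigenOverlap hA hB j k * f (hA.eigenvalues j) * g (hB.eigenvalues k)
        + ∑ j, f (hA.eigenvalues j) * f (hA.eigenvalues j) := by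
    rw [← sum_sum_eigenOverlap_mul_left hA hB fun j => f (hA.eigenvalues j) * f (hA.eigenvalues j),
      ← sum_sum_eigenOverlap_mul_right hA hB fun k => g (hB.eigenvalues k) * g (hB.eigenvalues k),
      Finset.mul_sum, ← Finset.sum_sub_distrib, ← Finset.sum_add_distrib]
    refine Finset.sum_congr rfl fun j _ => ?_
    rw [Finset.mul_sum, ← Finset.sum_sub_distrib, ← Finset.sum_add_distrib]
    exact Finset.sum_congr rfl fun k _ => by ring
  have hexpand : (cfc g B - cfc f A) * (cfc g B - cfc f A) =
      cfc g B * cfc g B - cfc f A * cfc g B - cfc g B * cfc f A + cfc f A * cfc f A := by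
    noncomm_ring
  rw [hexpand, trace_add, trace_sub, trace_sub, trace_mul_comm (cfc g B) (cfc f A),
    hB.trace_cfc_mul_cfc_self, trace_cfc_mul_cfc hA hB, hA.trace_cfc_mul_cfc_self, hsq]
  push_cast
  ring

end IsHermitian

end Matrix

open Matrix IsHermitian

section

variable {d : ℕ} {A B : Matrix (Fin d) (Fin d) ℂ}

lemma sum_eigenvalues_eq_re_trace (hA : A.IsHermitian) : ∑ j, hA.eigenvalues j = A.trace.re := by
  simp [hA.trace_eq_sum_eigenvalues]

lemma frobNorm_cfc_sub_cfc (hA : A.IsHermitian) (hB : B.IsHermitian) (f g : ℝ → ℝ) :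
    frobNorm (cfc g B - cfc f A) =
      √(∑ j, ∑ k, eigenOverlap hA hB j k * (f (hA.eigenvalues j) - g (hB.eigenvalues k)) ^ 2) := by
  have hsa : (cfc g B - cfc f A)ᴴ = cfc g B - cfc f A :=
    (IsSelfAdjoint.cfc.sub IsSelfAdjoint.cfc).star_eq
  rw [frobNorm, hsa, trace_mul_self_cfc_sub_cfc hA hB]
  simp only [Complex.coe_algebraMap, Complex.ofReal_re]

lemma frobNorm_sub (hA : A.IsHermitian) (hB : B.IsHermitian) :
    frobNorm (B - A) =
      √(∑ j, ∑ k, eigenOverlap hA hB j k * (hA.eigenvalues j - hB.eigenvalues k) ^ 2) := by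
  simpa only [cfc_id' ℝ A, cfc_id' ℝ B] using frobNorm_cfc_sub_cfc hA hB (fun x => x) (fun x => x)

lemma frobNorm_cfc (hB : B.IsHermitian) (g : ℝ → ℝ) :
    frobNorm (cfc g B) = √(∑ k, g (hB.eigenvalues k) ^ 2) := by
  have h := frobNorm_cfc_sub_cfc hB hB 0 g
  simp only [cfc_zero, sub_zero, Pi.zero_apply, zero_sub, neg_sq] at h
  rw [h, sum_sum_eigenOverlap_mul_right hB hB fun k => g (hB.eigenvalues k) ^ 2]

lemma abs_log_eigenvalues_le_frobNorm_matLog (hB : B.IsHermitian) (k : Fin d) :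
    |log (hB.eigenvalues k)| ≤ frobNorm (matLog B) := by
  rw [matLog, frobNorm_cfc hB]
  exact abs_le_sqrt (Finset.single_le_sum (fun i _ => sq_nonneg (log (hB.eigenvalues i)))
    (Finset.mem_univ k))

lemma exp_neg_le_eigenvalues_of_frobNorm_matLog_le (hB : B.PosDef) {D : ℝ}
    (hlog : frobNorm (matLog B) ≤ D) (k : Fin d) : exp (-D) ≤ hB.1.eigenvalues k := by
  calc exp (-D) ≤ exp (log (hB.1.eigenvalues k)) := exp_le_exp.2 (by
        linarith [neg_abs_le (log (hB.1.eigenvalues k)),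
          abs_log_eigenvalues_le_frobNorm_matLog hB.1 k])
    _ = hB.1.eigenvalues k := exp_log (hB.eigenvalues_pos k)

lemma relEntropy_eq_sum (hA : A.IsHermitian) (hB : B.IsHermitian) :
    relEntropy A B = ∑ j, ∑ k, eigenOverlap hA hB j k *
      (hA.eigenvalues j * (log (hA.eigenvalues j) - log (hB.eigenvalues k))) := by
  have hAA := hA.trace_cfc_mul_cfc_self (fun x => x) log
  have hAB := trace_cfc_mul_cfc hA hB (fun x => x) log
  rw [cfc_id' ℝ A] at hAA hAB
  rw [relEntropy, matLog, matLog, trace_sub, Complex.sub_re, hAA, hAB]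
  simp only [Complex.coe_algebraMap, Complex.ofReal_re]
  rw [← sum_sum_eigenOverlap_mul_left hA hB, ← Finset.sum_sub_distrib]
  refine Finset.sum_congr rfl fun j _ => ?_
  rw [← Finset.sum_sub_distrib]
  exact Finset.sum_congr rfl fun k _ => by ring

lemma relEntropy_nonneg (hA : A.PosDef) (hB : B.PosDef) (htr : A.trace = B.trace) :
    0 ≤ relEntropy A B := by
  have hsum : ∑ j, hA.1.eigenvalues j = ∑ k, hB.1.eigenvalues k := by
    rw [sum_eigenvalues_eq_re_trace, sum_eigenvalues_eq_re_trace, htr]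
  have hzero : ∑ j, ∑ k, eigenOverlap hA.1 hB.1 j k * (hA.1.eigenvalues j - hB.1.eigenvalues k)
      = 0 := by
    simp only [mul_sub, Finset.sum_sub_distrib, sum_sum_eigenOverlap_mul_left,
      sum_sum_eigenOverlap_mul_right, hsum, sub_self]
  rw [relEntropy_eq_sum hA.1 hB.1, ← hzero]
  exact Finset.sum_le_sum fun j _ => Finset.sum_le_sum fun k _ =>
    mul_le_mul_of_nonneg_left (sub_le_mul_log_sub_log (hA.eigenvalues_pos j)
      (hB.eigenvalues_pos k)) (eigenOverlap_nonneg hA.1 hB.1 j k)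

lemma relEntropy_le (hA : A.PosDef) (htA : A.trace = 1) (hB : B.IsHermitian) {D : ℝ}
    (hmu : ∀ k, exp (-D) ≤ hB.eigenvalues k) :
    relEntropy A B ≤ exp D * (√d * frobNorm (B - A)) := by
  set P := eigenOverlap hA.1 hB
  set lam := hA.1.eigenvalues
  set mu := hB.eigenvalues
  have hlam1 : ∀ j, lam j ≤ 1 := fun j => by
    have hsum : ∑ j, lam j = 1 := by
      rw [sum_eigenvalues_eq_re_trace, htA, Complex.one_re]
    exact hsum ▸ Finset.single_le_sum (fun i _ => (hA.eigenvalues_pos i).le) (Finset.mem_univ j)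
  have hmass : ∑ j, ∑ k, P j k = d := by
    simpa using sum_sum_eigenOverlap_mul_left hA.1 hB fun _ => 1
  have hcs := sum_mul_abs_le_sqrt_mul_sqrt Finset.univ (w := fun p : Fin d × Fin d => P p.1 p.2)
    (fun p => eigenOverlap_nonneg hA.1 hB p.1 p.2) (fun p => lam p.1 - mu p.2)
  simp only [Fintype.sum_prod_type, hmass] at hcs
  rw [relEntropy_eq_sum hA.1 hB, frobNorm_sub hA.1 hB]
  calc ∑ j, ∑ k, P j k * (lam j * (log (lam j) - log (mu k)))
      ≤ ∑ j, ∑ k, P j k * (exp D * |lam j - mu k|) :=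
        Finset.sum_le_sum fun j _ => Finset.sum_le_sum fun k _ =>
          mul_le_mul_of_nonneg_left (mul_log_sub_log_le (hA.eigenvalues_pos j) (hlam1 j) (hmu k))
            (eigenOverlap_nonneg _ _ j k)
    _ = exp D * ∑ j, ∑ k, P j k * |lam j - mu k| := by
        simp only [Finset.mul_sum, mul_left_comm (exp D)]
    _ ≤ exp D * (√d * √(∑ j, ∑ k, P j k * (lam j - mu k) ^ 2)) := by gcongr

theorem abs_relEntropy_le (hA : A.PosDef) (hB : B.PosDef) (htA : A.trace = 1)
    (htB : B.trace = 1) {D : ℝ} (hlog : frobNorm (matLog B) ≤ D) :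
    |relEntropy A B| ≤ exp D * (√d * frobNorm (B - A)) := by
  rw [abs_of_nonneg (relEntropy_nonneg hA hB (htA.trans htB.symm))]
  exact relEntropy_le hA htA hB.1 (exp_neg_le_eigenvalues_of_frobNorm_matLog_le hB hlog)

end

theorem stmt_10_general (d : ℕ) (hd : 1 ≤ d)
    (ρ ρhat : ℝ → Matrix (Fin d) (Fin d) ℂ)
    (hρ : ∀ t : ℝ, 0 ≤ t → (ρ t).PosDef ∧ (ρ t).trace = 1)
    (hρhat : ∀ t : ℝ, 0 ≤ t → (ρhat t).PosDef ∧ (ρhat t).trace = 1)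
    (M σ : ℝ) (hM : 0 < M) (hσ : 0 < σ)
    (hconv : ∀ t : ℝ, 0 ≤ t → frobNorm (ρhat t - ρ t) ≤ M * Real.exp (-(σ * t)))
    (D : ℝ) (hlog : ∀ t : ℝ, 0 ≤ t → frobNorm (matLog (ρhat t)) ≤ D) :
    ∃ T : ℝ, 0 < T ∧ ∃ K : ℝ, 0 < K ∧ ∀ t : ℝ, T ≤ t →
      |relEntropy (ρ t) (ρhat t)| ≤ K * Real.exp (-(σ * (1 - 1 / Real.exp 1) * t)) := by
  have hK : 0 < exp D * (√d * M) :=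
    mul_pos (exp_pos D) (mul_pos (sqrt_pos.2 (Nat.cast_pos.2 hd)) hM)
  refine ⟨1, one_pos, exp D * (√d * M), hK, fun t ht => ?_⟩
  have ht0 : 0 ≤ t := zero_le_one.trans ht
  obtain ⟨hρpos, hρtr⟩ := hρ t ht0
  obtain ⟨hρhatpos, hρhattr⟩ := hρhat t ht0
  have hrate : exp (-(σ * t)) ≤ exp (-(σ * (1 - 1 / exp 1) * t)) := by
    have : 0 ≤ σ * t / exp 1 := div_nonneg (mul_nonneg hσ.le ht0) (exp_pos 1).le
    exact exp_le_exp.2 (by linarith [show σ * (1 - 1 / exp 1) * t = σ * t - σ * t / exp 1 by ring])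
  calc |relEntropy (ρ t) (ρhat t)| ≤ exp D * (√d * frobNorm (ρhat t - ρ t)) :=
        abs_relEntropy_le hρpos hρhatpos hρtr hρhattr (hlog t ht0)
    _ ≤ exp D * (√d * (M * exp (-(σ * t)))) := by gcongr; exact hconv t ht0
    _ ≤ exp D * (√d * (M * exp (-(σ * (1 - 1 / exp 1) * t)))) := by gcongr
    _ = exp D * (√d * M) * exp (-(σ * (1 - 1 / exp 1) * t)) := by ring

theorem stmt_10 (d : ℕ) (hd : 1 ≤ d)
    (ρ ρhat : ℝ → Matrix (Fin d) (Fin d) ℂ)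
    (hρ : ∀ t : ℝ, 0 ≤ t → (ρ t).PosDef ∧ (ρ t).trace = 1)
    (hρhat : ∀ t : ℝ, 0 ≤ t → (ρhat t).PosDef ∧ (ρhat t).trace = 1)
    (M σ : ℝ) (hM : 0 < M) (hσ : 0 < σ)
    (hconv : ∀ t : ℝ, 0 ≤ t → frobNorm (ρhat t - ρ t) ≤ M * Real.exp (-(σ * t)))
    (D : ℝ) (hD : 0 < D) (hlog : ∀ t : ℝ, 0 ≤ t → frobNorm (matLog (ρhat t)) ≤ D) :
    ∃ T : ℝ, 0 < T ∧ ∃ K : ℝ, 0 < K ∧ ∀ t : ℝ, T ≤ t →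
      |relEntropy (ρ t) (ρhat t)| ≤ K * Real.exp (-(σ * (1 - 1 / Real.exp 1) * t)) :=
  stmt_10_general d hd ρ ρhat hρ hρhat M σ hM hσ hconv D hlog
end
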